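/- arXiv:0707.2810 — 3 statements merged into one kernel-verified Lean document; each statement's English description precedes it below -/
import Mathlib

section
/- Let (J, ≻) be a linearly ordered set, let φ, φ' : ℕ → J, and let H be a complex Hilbert space. Then for all n ∈ ℕ and all v_1,…,v_n, w_1,…,w_n ∈ H, |det((⟪v_k, w_l⟫ · 1[φ'(k) ⪰ φ(l)])_{k,l=1}^n)| ≤ Π_{k=1}^n ‖v_k‖·‖w_k‖. -/
/-!
Induct on `n`. Let `k₀` minimise `φ'` and let `P` be the set of columns `l` with
`φ l ≤ φ' k₀`: these columns are unmasked in every row. If the `w l`, `l ∈ P`, are linearly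
dependent, so are these columns and the determinant vanishes. Otherwise replace them by an
orthonormal basis `b` of their span: the matrix factors as `M' * C`, where `M'` is a matrix of the
same shape with the `w l` replaced by the `b l`, and `C` carries the coordinates of the `w l` in
`b`, so that `‖det C‖ ≤ ∏_{l ∈ P} ‖w l‖` by Hadamard's inequality. Choosing `b` with all but one
vector orthogonal to `v k₀`, row `k₀` of `M'` has a single nonzero entry, of norm at most
`‖v k₀‖`, and Laplace expansion along that row leaves a matrix of the same shape of size `n - 1`.
-/

open Module
open scoped InnerProductSpace

section

variable {𝕜 : Type*} [RCLike 𝕜]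

theorem OrthonormalBasis.norm_det_le {F ι : Type*} [NormedAddCommGroup F] [InnerProductSpace 𝕜 F]
    [Fintype ι] [DecidableEq ι] (b : OrthonormalBasis ι 𝕜 F) (u : ι → F) :
    ‖b.toBasis.det u‖ ≤ ∏ i, ‖u i‖ := by
  have : FiniteDimensional 𝕜 F := b.toBasis.finiteDimensional_of_finite
  let e := Fintype.equivFin ι
  have h : finrank 𝕜 F = Fintype.card (Fin (Fintype.card ι)) := by
    rw [finrank_eq_card_basis b.toBasis, Fintype.card_fin]
  -- In the Gram–Schmidt basis of `u`, the coordinate matrix of `u` is triangular.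
  let g := InnerProductSpace.gramSchmidtOrthonormalBasis h (u ∘ e.symm)
  have hdet : b.toBasis.det u = b.toBasis.det (g.reindex e.symm) * g.toBasis.det (u ∘ e.symm) := by
    conv_lhs => rw [AlternatingMap.eq_smul_basis_det (g.reindex e.symm).toBasis b.toBasis.det]
    simp [OrthonormalBasis.reindex_toBasis, Basis.det_reindex]
  rw [hdet, norm_mul, b.det_to_matrix_orthonormalBasis, one_mul,
    InnerProductSpace.gramSchmidtOrthonormalBasis_det, norm_prod, ← e.symm.prod_comp]
  gcongr with i
  simpa [g.orthonormal.1 i] using norm_inner_le_norm (𝕜 := 𝕜) (g i) (u (e.symm i))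

theorem OrthonormalBasis.exists_inner_eq_zero_of_ne {F ι : Type*} [NormedAddCommGroup F]
    [InnerProductSpace 𝕜 F] [FiniteDimensional 𝕜 F] [Fintype ι]
    (h : finrank 𝕜 F = Fintype.card ι) (x : F) (i₀ : ι) :
    ∃ b : OrthonormalBasis ι 𝕜 F, ∀ i ≠ i₀, ⟪x, b i⟫_𝕜 = 0 := by
  obtain ⟨e, he, hxe⟩ : ∃ e : F, ‖e‖ = 1 ∧ x = (‖x‖ : 𝕜) • e := by
    by_cases hx : x = 0
    · have : Nontrivial F := finrank_pos_iff.mp (h ▸ Fintype.card_pos_iff.mpr ⟨i₀⟩)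
      obtain ⟨y, hy⟩ := exists_ne (0 : F)
      exact ⟨_, norm_smul_inv_norm (𝕜 := 𝕜) hy, by simp [hx]⟩
    · refine ⟨(‖x‖ : 𝕜)⁻¹ • x, norm_smul_inv_norm hx, ?_⟩
      rw [smul_inv_smul₀ (by exact_mod_cast norm_ne_zero_iff.mpr hx)]
  have he' : Orthonormal 𝕜 (({i₀} : Set ι).domRestrict fun _ => e) :=
    ⟨fun _ => he, fun i j hij => (hij (Subsingleton.elim i j)).elim⟩
  obtain ⟨b, hb⟩ := he'.exists_orthonormalBasis_extension_of_card_eq h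
  refine ⟨b, fun i hi => ?_⟩
  rw [hxe, inner_smul_left, ← hb i₀ rfl, b.orthonormal.2 hi.symm, mul_zero]

theorem Submodule.exists_orthonormalBasis_inner_eq_zero_of_ne {E ι : Type*}
    [NormedAddCommGroup E] [InnerProductSpace 𝕜 E] [Fintype ι] (W : Submodule 𝕜 E)
    [FiniteDimensional 𝕜 W] (h : finrank 𝕜 W = Fintype.card ι) (v : E) (i₀ : ι) :
    ∃ b : OrthonormalBasis ι 𝕜 W, ∀ i ≠ i₀, ⟪v, b i⟫_𝕜 = 0 := by
  obtain ⟨b, hb⟩ := OrthonormalBasis.exists_inner_eq_zero_of_ne h (W.orthogonalProjectionOnto v) i₀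
  refine ⟨b, fun i hi => ?_⟩
  rw [← W.inner_orthogonalProjectionOnto_eq_of_mem_right, ← hb i hi]

theorem Matrix.det_succ_row_of_forall_ne_eq_zero {R : Type*} [CommRing R] {n : ℕ}
    (A : Matrix (Fin (n + 1)) (Fin (n + 1)) R) {i j : Fin (n + 1)} (h : ∀ l ≠ j, A i l = 0) :
    A.det = (-1) ^ (i + j : ℕ) * A i j * (A.submatrix i.succAbove j.succAbove).det := by
  rw [A.det_succ_row i, Finset.sum_eq_single j (fun l _ hl => by rw [h l hl, mul_zero, zero_mul])
    (fun hj => absurd (Finset.mem_univ j) hj)]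

variable {E J ι : Type*} [NormedAddCommGroup E] [InnerProductSpace 𝕜 E] [LinearOrder J]

variable (𝕜) in
def maskedGram (φ ψ : ι → J) (v w : ι → E) : Matrix ι ι 𝕜 :=
  Matrix.of fun k l => ⟪v k, w l⟫_𝕜 * if φ l ≤ ψ k then 1 else 0

namespace OrthonormalBasis

variable [Fintype ι] {P : ι → Prop} [DecidablePred P] {W : Submodule 𝕜 E}

noncomputable def replaceOn (b : OrthonormalBasis {l // P l} 𝕜 W) (w : ι → E) : ι → E :=
  fun l => if h : P l then b ⟨l, h⟩ else w l

theorem replaceOn_coe (b : OrthonormalBasis {l // P l} 𝕜 W) (w : ι → E) (l : {l // P l}) :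
    b.replaceOn w l = b l :=
  dif_pos l.2

theorem replaceOn_of_not (b : OrthonormalBasis {l // P l} 𝕜 W) (w : ι → E) {l : ι} (hl : ¬P l) :
    b.replaceOn w l = w l :=
  dif_neg hl

theorem prod_norm_replaceOn_mul (b : OrthonormalBasis {l // P l} 𝕜 W) (w : ι → E) :
    (∏ l, ‖b.replaceOn w l‖) * ∏ l : {l // P l}, ‖w l‖ = ∏ l, ‖w l‖ := by
  have hbasis : ∏ l : {l // P l}, ‖b.replaceOn w l‖ = 1 :=
    Fintype.prod_eq_one _ fun l => by rw [replaceOn_coe]; exact b.orthonormal.1 l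
  have hrest : ∏ l : {l // ¬P l}, ‖b.replaceOn w l‖ = ∏ l : {l // ¬P l}, ‖w l‖ :=
    Fintype.prod_congr _ _ fun l => by rw [replaceOn_of_not b w l.2]
  rw [← Fintype.prod_subtype_mul_prod_subtype P fun l => ‖b.replaceOn w l‖, hbasis, hrest,
    ← Fintype.prod_subtype_mul_prod_subtype P fun l => ‖w l‖]
  ring

noncomputable def coordMatrix [DecidableEq ι] (b : OrthonormalBasis {l // P l} 𝕜 W) (w : ι → E) :
    Matrix ι ι 𝕜 :=
  Matrix.of fun l j => if P j then ⟪b.replaceOn 0 l, w j⟫_𝕜 else if l = j then 1 else 0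

theorem det_coordMatrix [DecidableEq ι] (b : OrthonormalBasis {l // P l} 𝕜 W)
    {w : ι → E} (hw : ∀ l, P l → w l ∈ W) :
    (b.coordMatrix w).det = b.toBasis.det fun j => ⟨w j, hw j j.2⟩ := by
  have hzero : ∀ l, ¬P l → ∀ j, P j → b.coordMatrix w l j = 0 := fun l hl j hj => by
    simp [coordMatrix, hj, replaceOn_of_not b 0 hl]
  have hP : (b.coordMatrix w).toSquareBlockProp P =
      b.toBasis.toMatrix fun j : {l // P l} => ⟨w j, hw j j.2⟩ := by
    ext i j
    simp [coordMatrix, Matrix.toSquareBlockProp_def, j.2, replaceOn_coe,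
      Module.Basis.toMatrix_apply, OrthonormalBasis.repr_apply_apply]
  have hnP : (b.coordMatrix w).toSquareBlockProp (¬P ·) = 1 := by
    ext i j
    simp [coordMatrix, Matrix.toSquareBlockProp_def, Matrix.one_apply, j.2, Subtype.ext_iff]
  rw [Matrix.twoBlockTriangular_det _ P hzero, hP, hnP, Matrix.det_one, mul_one,
    Module.Basis.det_apply]

end OrthonormalBasis

section Fintype

variable [Fintype ι] [DecidableEq ι] {φ ψ : ι → J} {P : ι → Prop} [DecidablePred P]

theorem det_maskedGram_eq_zero_of_not_linearIndependent {v w : ι → E}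
    (hP : ∀ k l, P l → φ l ≤ ψ k) (h : ¬LinearIndependent 𝕜 fun l : {l // P l} => w l) :
    (maskedGram 𝕜 φ ψ v w).det = 0 := by
  obtain ⟨g, hg, i, hi⟩ := Fintype.not_linearIndependent_iff.mp h
  rw [← Matrix.exists_mulVec_eq_zero_iff]
  refine ⟨fun l => if h : P l then g ⟨l, h⟩ else 0,
    fun h0 => hi (by simpa [i.2] using congrFun h0 i), funext fun k => ?_⟩
  calc _ = ∑ l : {l // P l}, ⟪v k, g l • w l⟫_𝕜 := by
        have hpos (l : {l // P l}) : (if h : P l then g ⟨l, h⟩ else 0) = g l := dif_pos l.2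
        have hneg (l : {l // ¬P l}) : (if h : P l then g ⟨l, h⟩ else 0) = 0 := dif_neg l.2
        rw [Matrix.mulVec, dotProduct, ← Fintype.sum_subtype_add_sum_subtype P]
        simp only [hpos, hneg, mul_zero, Finset.sum_const_zero, add_zero]
        refine Fintype.sum_congr _ _ fun l => ?_
        rw [maskedGram, Matrix.of_apply, if_pos (hP k l l.2), inner_smul_right]
        ring
    _ = 0 := by rw [← inner_sum, hg, inner_zero_right]

theorem maskedGram_eq_mul_coordMatrix (v : ι → E) {w : ι → E} (hP : ∀ k l, P l → φ l ≤ ψ k)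
    {W : Submodule 𝕜 E} (hw : ∀ l, P l → w l ∈ W) (b : OrthonormalBasis {l // P l} 𝕜 W) :
    maskedGram 𝕜 φ ψ v w = maskedGram 𝕜 φ ψ v (b.replaceOn w) * b.coordMatrix w := by
  ext k j
  rw [Matrix.mul_apply]
  by_cases hj : P j
  · have hsum : ∑ i, ⟪(b i : E), w j⟫_𝕜 • (b i : E) = w j := by
      simpa using congrArg Subtype.val (b.sum_repr' ⟨w j, hw j hj⟩)
    rw [← Fintype.sum_subtype_add_sum_subtype P]
    simp only [OrthonormalBasis.coordMatrix, Matrix.of_apply, if_pos hj,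
      OrthonormalBasis.replaceOn_coe, fun l : {l // ¬P l} => b.replaceOn_of_not 0 l.2,
      Pi.zero_apply, inner_zero_left, mul_zero, Finset.sum_const_zero, add_zero]
    calc maskedGram 𝕜 φ ψ v w k j = ⟪v k, ∑ i, ⟪(b i : E), w j⟫_𝕜 • (b i : E)⟫_𝕜 := by
          rw [hsum, maskedGram, Matrix.of_apply, if_pos (hP k j hj), mul_one]
      _ = _ := by
          rw [inner_sum]
          refine Fintype.sum_congr _ _ fun l => ?_
          rw [maskedGram, Matrix.of_apply, OrthonormalBasis.replaceOn_coe, if_pos (hP k l l.2),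
            inner_smul_right]
          ring
  · rw [Fintype.sum_eq_single j fun l hl => by simp [OrthonormalBasis.coordMatrix, hj, hl]]
    simp [maskedGram, OrthonormalBasis.coordMatrix, b.replaceOn_of_not w hj, hj]

theorem norm_det_maskedGram_le_of_replaceOn {v w : ι → E} (hP : ∀ k l, P l → φ l ≤ ψ k)
    {W : Submodule 𝕜 E} (hw : ∀ l, P l → w l ∈ W) (b : OrthonormalBasis {l // P l} 𝕜 W)
    (h : ‖(maskedGram 𝕜 φ ψ v (b.replaceOn w)).det‖ ≤ ∏ k, ‖v k‖ * ‖b.replaceOn w k‖) :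
    ‖(maskedGram 𝕜 φ ψ v w).det‖ ≤ ∏ k, ‖v k‖ * ‖w k‖ := by
  rw [maskedGram_eq_mul_coordMatrix v hP hw b, Matrix.det_mul, norm_mul, b.det_coordMatrix hw]
  calc _ ≤ (∏ k, ‖v k‖ * ‖b.replaceOn w k‖) * ∏ l : {l // P l}, ‖w l‖ :=
        mul_le_mul h (b.norm_det_le _) (norm_nonneg _) (by positivity)
    _ = _ := by
        rw [Finset.prod_mul_distrib, Finset.prod_mul_distrib, mul_assoc,
          b.prod_norm_replaceOn_mul]

end Fintype

theorem norm_det_maskedGram_succ_le {n : ℕ}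
    (ih : ∀ (φ ψ : Fin n → J) (v w : Fin n → E),
      ‖(maskedGram 𝕜 φ ψ v w).det‖ ≤ ∏ k, ‖v k‖ * ‖w k‖)
    {φ ψ : Fin (n + 1) → J} {v w : Fin (n + 1) → E} {k₀ l₁ : Fin (n + 1)}
    (hrow : ∀ l ≠ l₁, maskedGram 𝕜 φ ψ v w k₀ l = 0) :
    ‖(maskedGram 𝕜 φ ψ v w).det‖ ≤ ∏ k, ‖v k‖ * ‖w k‖ := by
  have hentry : ‖maskedGram 𝕜 φ ψ v w k₀ l₁‖ ≤ ‖v k₀‖ * ‖w l₁‖ := by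
    rw [maskedGram, Matrix.of_apply, norm_mul, ← mul_one (‖v k₀‖ * ‖w l₁‖)]
    exact mul_le_mul (norm_inner_le_norm _ _) (by split_ifs <;> simp) (norm_nonneg _)
      (by positivity)
  have hminor := ih (φ ∘ l₁.succAbove) (ψ ∘ k₀.succAbove) (v ∘ k₀.succAbove) (w ∘ l₁.succAbove)
  rw [Finset.prod_mul_distrib] at hminor
  rw [Matrix.det_succ_row_of_forall_ne_eq_zero _ hrow, norm_mul, norm_mul, norm_pow, norm_neg,
    norm_one, one_pow, one_mul, Finset.prod_mul_distrib, Fin.prod_univ_succAbove _ k₀,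
    Fin.prod_univ_succAbove (fun l => ‖w l‖) l₁]
  calc _ ≤ ‖v k₀‖ * ‖w l₁‖ *
        ((∏ k, ‖v (k₀.succAbove k)‖) * ∏ k, ‖w (l₁.succAbove k)‖) :=
        mul_le_mul hentry hminor (norm_nonneg _) (by positivity)
    _ = _ := by ring

theorem norm_det_maskedGram_le : ∀ {n : ℕ} (φ ψ : Fin n → J) (v w : Fin n → E),
    ‖(maskedGram 𝕜 φ ψ v w).det‖ ≤ ∏ k, ‖v k‖ * ‖w k‖
  | 0, _, _, _, _ => by simp
  | n + 1, φ, ψ, v, w => by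
    obtain ⟨k₀, -, hk₀⟩ := Finset.univ.exists_min_image ψ Finset.univ_nonempty
    let P (l : Fin (n + 1)) : Prop := φ l ≤ ψ k₀
    have hP k l (hl : P l) : φ l ≤ ψ k := hl.trans (hk₀ k (Finset.mem_univ k))
    by_cases hind : LinearIndependent 𝕜 fun l : {l // P l} => w l
    case neg =>
      rw [det_maskedGram_eq_zero_of_not_linearIndependent hP hind, norm_zero]
      positivity
    by_cases hnonempty : ∃ l₁, P l₁
    case neg =>
      refine norm_det_maskedGram_succ_le norm_det_maskedGram_le (k₀ := k₀) (l₁ := k₀)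
        fun l _ => ?_
      simp only [P, not_exists, not_le] at hnonempty
      simp [maskedGram, hnonempty l]
    obtain ⟨l₁, hl₁⟩ := hnonempty
    let W := Submodule.span 𝕜 (Set.range fun l : {l // P l} => w l)
    have : FiniteDimensional 𝕜 W := .span_of_finite 𝕜 (Set.finite_range _)
    have hw l (hl : P l) : w l ∈ W := Submodule.subset_span ⟨⟨l, hl⟩, rfl⟩
    obtain ⟨b, hb⟩ := W.exists_orthonormalBasis_inner_eq_zero_of_ne
      (finrank_span_eq_card hind) (v k₀) ⟨l₁, hl₁⟩
    refine norm_det_maskedGram_le_of_replaceOn hP hw b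
      (norm_det_maskedGram_succ_le norm_det_maskedGram_le (k₀ := k₀) (l₁ := l₁) fun l hl => ?_)
    by_cases h : P l
    · simp [maskedGram, b.replaceOn_coe w ⟨l, h⟩, hb ⟨l, h⟩ (by simpa using hl)]
    · simp only [P] at h
      simp [maskedGram, h]

end

theorem stmt7_general {J : Type*} [LinearOrder J] (φ φ' : ℕ → J)
    {H : Type*} [NormedAddCommGroup H] [InnerProductSpace ℂ H]
    (n : ℕ) (v w : Fin n → H) :
    ‖Matrix.det (Matrix.of fun k l : Fin n =>
        (inner ℂ (v k) (w l) : ℂ) * (if φ (l : ℕ) ≤ φ' (k : ℕ) then 1 else 0))‖ ≤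
      ∏ k : Fin n, ‖v k‖ * ‖w k‖ :=
  norm_det_maskedGram_le (fun l => φ l) (fun k => φ' k) v w

/-- the determinant of the matrix `(⟪v_k, w_l⟫ · 1[φ'(k) ⪰ φ(l)])_{k,l}`
is bounded by `∏_k ‖v_k‖·‖w_k‖`. -/
theorem stmt7 {J : Type*} [LinearOrder J] (φ φ' : ℕ → J)
    {H : Type*} [NormedAddCommGroup H] [InnerProductSpace ℂ H] [CompleteSpace H]
    (n : ℕ) (v w : Fin n → H) :
    ‖Matrix.det (Matrix.of fun k l : Fin n =>
        (inner ℂ (v k) (w l) : ℂ) * (if φ (l : ℕ) ≤ φ' (k : ℕ) then 1 else 0))‖ ≤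
      ∏ k : Fin n, ‖v k‖ * ‖w k‖ :=
  stmt7_general φ φ' n v w
end

section
/- Let β > 0 and for ε > 0 define Φ(s,ε) = (1/√π) · √(ε f_β(−ε)) / (i s − ε), where f_β(E) = (1+e^{βE})^{-1}. Then s ↦ Φ(s,ε) belongs to L²(ℝ) with ‖Φ(·,ε)‖_{L²} ≤ 1, and for all τ ≥ 0 and ε > 0, ∫_ℝ e^{i s τ} |Φ(s,ε)|² ds = e^{−ετ} f_β(−ε). -/
open MeasureTheory

/-- The Fermi function `f_β(E) = (1+e^{βE})⁻¹`. -/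
noncomputable def fermiF (β E : ℝ) : ℝ := (1 + Real.exp (β * E))⁻¹

/-- `Φ(s,ε) = (1/√π)·√(ε f_β(−ε)) / (i s − ε)`. -/
noncomputable def PhiFn (β s ε : ℝ) : ℂ :=
  ((1 / Real.sqrt Real.pi : ℝ) : ℂ) * ((Real.sqrt (ε * fermiF β (-ε)) : ℝ) : ℂ) /
    (Complex.I * (s : ℂ) - (ε : ℂ))

/-!
`|Φ(s,ε)|² = (ε f_β(-ε)/π) / (ε² + s²)` is a Lorentzian, the Fourier transform of the
two-sided exponential `e^{-ε|t|}` (up to normalisation). Fourier inversion therefore gives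
`∫ e^{isτ} ds / (ε² + s²) = (π/ε) e^{-ε|τ|}`, which is the claimed identity; its case `τ = 0` is
`‖Φ(·,ε)‖²_{L²} = f_β(-ε) ≤ 1`.
-/

open Set Complex
open scoped Real FourierTransform

section Lorentzian

variable {ε : ℝ}

lemma integral_cexp_mul_exp_neg_mul_abs (hε : 0 < ε) (a : ℝ) :
    ∫ t : ℝ, cexp (I * a * t) * Real.exp (-(ε * |t|)) = 2 * ε / (ε ^ 2 + a ^ 2) := by
  set g : ℝ → ℂ := fun t => cexp (I * a * t) * Real.exp (-(ε * |t|))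
  have hneg : EqOn g (fun t => cexp ((I * a + ε) * t)) (Iic 0) := by
    intro t (ht : t ≤ 0)
    simp only [g, abs_of_nonpos ht, ofReal_exp, ← Complex.exp_add]
    push_cast
    ring_nf
  have hpos : EqOn g (fun t => cexp ((I * a - ε) * t)) (Ioi 0) := by
    intro t (ht : 0 < t)
    simp only [g, abs_of_pos ht, ofReal_exp, ← Complex.exp_add]
    push_cast
    ring_nf
  have hre_neg : 0 < (I * a + ε).re := by simpa using hε
  have hre_pos : (I * a - ε).re < 0 := by simpa using hε
  rw [← intervalIntegral.integral_Iic_add_Ioi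
      ((integrableOn_exp_mul_complex_Iic hre_neg 0).congr_fun hneg.symm measurableSet_Iic)
      ((integrableOn_exp_mul_complex_Ioi hre_pos 0).congr_fun hpos.symm measurableSet_Ioi),
    setIntegral_congr_fun measurableSet_Iic hneg, setIntegral_congr_fun measurableSet_Ioi hpos,
    integral_exp_mul_complex_Iic hre_neg, integral_exp_mul_complex_Ioi hre_pos]
  have h₁ : I * a + ε ≠ 0 := fun h => by simpa [hε.ne'] using congrArg re h
  have h₂ : I * a - ε ≠ 0 := fun h => by simpa [hε.ne'] using congrArg re h
  have h₃ : (ε : ℂ) ^ 2 + a ^ 2 ≠ 0 := by exact_mod_cast (by positivity : ε ^ 2 + a ^ 2 ≠ 0)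
  simp only [ofReal_zero, mul_zero, Complex.exp_zero]
  field_simp
  linear_combination (-2 * ε * a ^ 2 : ℂ) * I_sq

lemma integrable_exp_neg_mul_abs (hε : 0 < ε) :
    Integrable fun t : ℝ => Real.exp (-(ε * |t|)) := by
  rw [← integrableOn_univ, ← Iic_union_Ioi (a := 0)]
  refine ((integrableOn_exp_mul_Iic hε 0).congr_fun ?_ measurableSet_Iic).union
    ((integrableOn_exp_mul_Ioi (neg_neg_of_pos hε) 0).congr_fun ?_ measurableSet_Ioi)
  · intro t (ht : t ≤ 0)
    simp [abs_of_nonpos ht]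
  · intro t (ht : 0 < t)
    simp [abs_of_pos ht]

lemma fourier_exp_neg_mul_abs (hε : 0 < ε) :
    𝓕 (fun t : ℝ => (Real.exp (-(ε * |t|)) : ℂ)) =
      fun w => ((2 * ε * (ε ^ 2 + (2 * π * w) ^ 2)⁻¹ : ℝ) : ℂ) := by
  ext w
  have hintegrand : ∀ t : ℝ, cexp (↑(-2 * π * t * w) * I) • (Real.exp (-(ε * |t|)) : ℂ) =
      cexp (I * ↑(-(2 * π * w)) * t) * Real.exp (-(ε * |t|)) := fun t => by
    rw [smul_eq_mul]
    push_cast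
    ring_nf
  rw [Real.fourier_real_eq_integral_exp_smul, funext hintegrand,
    integral_cexp_mul_exp_neg_mul_abs hε]
  push_cast
  ring

lemma integrable_inv_sq_add_sq (hε : 0 < ε) :
    Integrable fun s : ℝ => (ε ^ 2 + s ^ 2)⁻¹ := by
  refine ((integrable_inv_one_add_sq.comp_div hε.ne').const_mul (ε ^ 2)⁻¹).congr ?_
  filter_upwards with s
  field_simp

theorem integral_cexp_mul_inv_sq_add_sq (hε : 0 < ε) (τ : ℝ) :
    ∫ s : ℝ, cexp (I * s * τ) * ((ε ^ 2 + s ^ 2)⁻¹ : ℝ) =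
      ((π / ε * Real.exp (-(ε * |τ|)) : ℝ) : ℂ) := by
  set g : ℝ → ℂ := fun t => Real.exp (-(ε * |t|))
  have hFg : Integrable (𝓕 g) := by
    rw [fourier_exp_neg_mul_abs hε]
    exact (((integrable_inv_sq_add_sq hε).comp_mul_left' Real.two_pi_pos.ne').const_mul
      (2 * ε)).ofReal
  have hinv := (integrable_exp_neg_mul_abs hε).ofReal.fourierInv_fourier_eq hFg
    (v := τ) (by fun_prop : Continuous g).continuousAt
  rw [Real.fourierInv_eq', fourier_exp_neg_mul_abs hε] at hinv
  simp_rw [RCLike.inner_apply, conj_trivial, smul_eq_mul] at hinv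
  set F : ℝ → ℂ := fun s => cexp (I * s * τ) * ((ε ^ 2 + s ^ 2)⁻¹ : ℝ)
  have hF : ∀ v : ℝ, cexp (↑(2 * π * (τ * v)) * I) * ↑(2 * ε * (ε ^ 2 + (2 * π * v) ^ 2)⁻¹) =
      (2 * ε : ℂ) * F (2 * π * v) := fun v => by
    simp only [F]
    push_cast
    ring_nf
  rw [funext hF, integral_const_mul, Measure.integral_comp_mul_left F (2 * π),
    abs_of_pos (inv_pos.2 Real.two_pi_pos), real_smul] at hinv
  have hε' : (ε : ℂ) ≠ 0 := ofReal_ne_zero.2 hε.ne'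
  have hπ : (π : ℂ) ≠ 0 := ofReal_ne_zero.2 Real.pi_ne_zero
  rw [ofReal_mul]
  change _ = _ * g τ
  rw [← hinv]
  push_cast
  field_simp

end Lorentzian

lemma fermiF_pos (β E : ℝ) : 0 < fermiF β E := by
  unfold fermiF
  positivity

lemma fermiF_le_one (β E : ℝ) : fermiF β E ≤ 1 :=
  inv_le_one_of_one_le₀ (le_add_of_nonneg_right (Real.exp_nonneg _))

lemma sq_norm_I_mul_sub (s ε : ℝ) : ‖I * s - ε‖ ^ 2 = ε ^ 2 + s ^ 2 := by
  rw [Complex.sq_norm, normSq_apply]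
  simp only [sub_re, sub_im, mul_re, mul_im, I_re, I_im, ofReal_re, ofReal_im]
  ring

lemma sq_norm_PhiFn (β : ℝ) {ε : ℝ} (hε : 0 ≤ ε) (s : ℝ) :
    ‖PhiFn β s ε‖ ^ 2 = ε * fermiF β (-ε) / π * (ε ^ 2 + s ^ 2)⁻¹ := by
  have hεf : 0 ≤ ε * fermiF β (-ε) := mul_nonneg hε (fermiF_pos _ _).le
  rw [PhiFn, norm_div, div_pow, norm_mul, mul_pow, sq_norm_I_mul_sub, norm_real, norm_real,
    Real.norm_eq_abs, Real.norm_eq_abs, sq_abs, sq_abs, div_pow, Real.sq_sqrt Real.pi_pos.le,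
    Real.sq_sqrt hεf]
  ring

lemma continuous_PhiFn (β : ℝ) {ε : ℝ} (hε : ε ≠ 0) : Continuous fun s : ℝ => PhiFn β s ε :=
  continuous_const.div (by fun_prop) fun s h => hε (by simpa using congrArg re h)

theorem stmt13_general (β : ℝ) (ε : ℝ) (hε : 0 < ε) :
    MemLp (fun s : ℝ => PhiFn β s ε) 2 volume ∧
      eLpNorm (fun s : ℝ => PhiFn β s ε) 2 volume ≤ 1 ∧
      ∀ τ : ℝ, 0 ≤ τ →
        ∫ s : ℝ, Complex.exp (Complex.I * (s : ℂ) * (τ : ℂ)) *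
            ((‖PhiFn β s ε‖ : ℝ) : ℂ) ^ 2 =
          ((Real.exp (-ε * τ) * fermiF β (-ε) : ℝ) : ℂ) := by
  have hsq := sq_norm_PhiFn β hε.le
  have hfourier : ∀ τ : ℝ, ∫ s : ℝ, cexp (I * s * τ) * ((‖PhiFn β s ε‖ : ℝ) : ℂ) ^ 2 =
      ((Real.exp (-ε * |τ|) * fermiF β (-ε) : ℝ) : ℂ) := fun τ => by
    simp_rw [← ofReal_pow, hsq, ofReal_mul, mul_left_comm _ ((_ / π : ℝ) : ℂ),
      integral_const_mul, ← ofReal_mul, integral_cexp_mul_inv_sq_add_sq hε]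
    rw [← ofReal_mul, neg_mul]
    congr 1
    field_simp
  have hmem : MemLp (fun s : ℝ => PhiFn β s ε) 2 volume :=
    (memLp_two_iff_integrable_sq_norm (continuous_PhiFn β hε.ne').aestronglyMeasurable).2 <| by
      simp_rw [hsq]
      exact (integrable_inv_sq_add_sq hε).const_mul _
  have hL2 : ∫ s : ℝ, ‖PhiFn β s ε‖ ^ 2 = fermiF β (-ε) := by
    simpa only [ofReal_zero, mul_zero, zero_mul, Complex.exp_zero, one_mul, abs_zero,
      Real.exp_zero, ← ofReal_pow, integral_complex_ofReal, ofReal_inj] using hfourier 0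
  refine ⟨hmem, ?_, fun τ hτ => by rw [hfourier, abs_of_nonneg hτ]⟩
  rw [hmem.eLpNorm_eq_integral_rpow_norm two_ne_zero ENNReal.ofNat_ne_top]
  simp only [ENNReal.toReal_ofNat, Real.rpow_two, hL2]
  exact ENNReal.ofReal_le_one.2 (Real.rpow_le_one (fermiF_pos _ _).le (fermiF_le_one _ _)
    (by norm_num))

/-- for `β > 0` and `ε > 0`, `s ↦ Φ(s,ε)` is in `L²(ℝ)` with
`‖Φ(·,ε)‖_{L²} ≤ 1`, and for all `τ ≥ 0`,
`∫ e^{isτ} |Φ(s,ε)|² ds = e^{−ετ} f_β(−ε)`. -/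
theorem stmt13 (β : ℝ) (hβ : 0 < β) (ε : ℝ) (hε : 0 < ε) :
    MemLp (fun s : ℝ => PhiFn β s ε) 2 volume ∧
      eLpNorm (fun s : ℝ => PhiFn β s ε) 2 volume ≤ 1 ∧
      ∀ τ : ℝ, 0 ≤ τ →
        ∫ s : ℝ, Complex.exp (Complex.I * (s : ℂ) * (τ : ℂ)) *
            ((‖PhiFn β s ε‖ : ℝ) : ℂ) ^ 2 =
          ((Real.exp (-ε * τ) * fermiF β (-ε) : ℝ) : ℂ) :=
  stmt13_general β ε hε
end

section
/- Let X be a set and let C be an (X×X)-matrix with a Gram representation (H,v,w) with Gram constant γ. Let n ∈ ℕ and let P be a complex Hermitian positive semidefinite n×n matrix with P_{ii} ≤ 1 for all i. Then for all x_1,…,x_n, y_1,…,y_n ∈ X, |det((C(x_i,y_j)·P_{ij})_{i,j=1}^n)| ≤ γ^{2n}. -/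
/-!
Factor `P = Aᴴ A`. Then `C(x_i, y_j) P_ij` is the inner product of `u_i = A_{·i} ⊗ v(x_i)` and
`z_j = A_{·j} ⊗ w(y_j)`, vectors of norm at most `γ` because `‖A_{·i}‖² = P_ii ≤ 1`, so it suffices
to prove Hadamard's inequality `|det ⟪u_i, z_j⟫| ≤ ∏ ‖u_i‖ ∏ ‖z_j‖` for Gram determinants.
The determinant vanishes unless the `z_j` are independent; if they are, project the `u_i` onto
their span `W` and write the Gram matrix as `Bᴴ B'` with coordinate matrices in an orthonormal
basis of `W`. Each coordinate determinant is at most the product of the norms, since comparing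
with the Gram–Schmidt basis of the family changes it by a unimodular factor and makes it triangular.
-/

open Module Finset
open scoped ComplexOrder
open scoped Matrix InnerProductSpace

section

variable {𝕜 E ι : Type*} [RCLike 𝕜] [NormedAddCommGroup E] [InnerProductSpace 𝕜 E]

section Determinant

variable [Fintype ι] [DecidableEq ι]

theorem OrthonormalBasis.norm_det_le_prod_norm [FiniteDimensional 𝕜 E]
    (b : OrthonormalBasis ι 𝕜 E) (f : ι → E) :
    ‖b.toBasis.det f‖ ≤ ∏ i, ‖f i‖ := by
  let _ : LinearOrder ι := LinearOrder.lift' _ (Fintype.equivFin ι).injective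
  let _ : LocallyFiniteOrderBot ι := LocallyFiniteOrderBot.ofIic ι (fun a => {x | x ≤ a}) (by simp)
  let g := InnerProductSpace.gramSchmidtOrthonormalBasis (finrank_eq_card_basis b.toBasis) f
  have hg : ‖g.toBasis.det f‖ ≤ ∏ i, ‖f i‖ := by
    rw [InnerProductSpace.gramSchmidtOrthonormalBasis_det, norm_prod]
    gcongr with i
    simpa using norm_inner_le_norm (𝕜 := 𝕜) (g i) (f i)
  rw [AlternatingMap.eq_smul_basis_det g.toBasis b.toBasis.det, AlternatingMap.smul_apply,
    smul_eq_mul, norm_mul, g.coe_toBasis, b.det_to_matrix_orthonormalBasis, one_mul]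
  exact hg

theorem OrthonormalBasis.det_inner [FiniteDimensional 𝕜 E]
    (b : OrthonormalBasis ι 𝕜 E) (u z : ι → E) :
    (Matrix.of fun i j => ⟪u i, z j⟫_𝕜).det = star (b.toBasis.det u) * b.toBasis.det z := by
  rw [Basis.det_apply, Basis.det_apply, ← Matrix.det_conjTranspose, ← Matrix.det_mul]
  congr 1
  ext i j
  simp [Matrix.mul_apply, Basis.toMatrix_apply, b.repr_apply_apply, b.sum_inner_mul_inner]

theorem norm_det_inner_le_of_finrank_eq [FiniteDimensional 𝕜 E]
    (h : finrank 𝕜 E = Fintype.card ι) (u z : ι → E) :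
    ‖(Matrix.of fun i j => ⟪u i, z j⟫_𝕜).det‖ ≤ (∏ i, ‖u i‖) * ∏ j, ‖z j‖ := by
  let b : OrthonormalBasis ι 𝕜 E :=
    (stdOrthonormalBasis 𝕜 E).reindex (Fintype.equivFinOfCardEq h.symm).symm
  rw [b.det_inner, norm_mul, norm_star]
  exact mul_le_mul (b.norm_det_le_prod_norm u) (b.norm_det_le_prod_norm z) (norm_nonneg _)
    (by positivity)

theorem det_inner_eq_zero_of_not_linearIndependent {z : ι → E} (hz : ¬LinearIndependent 𝕜 z)
    (u : ι → E) : (Matrix.of fun i j => ⟪u i, z j⟫_𝕜).det = 0 := by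
  obtain ⟨c, hc, j, hj⟩ := Fintype.not_linearIndependent_iff.mp hz
  refine Matrix.exists_mulVec_eq_zero_iff.mp ⟨c, fun h => hj (congrFun h j), ?_⟩
  ext i
  simp [Matrix.mulVec, dotProduct, mul_comm, ← inner_smul_right, ← inner_sum, hc]

theorem norm_det_inner_le (u z : ι → E) :
    ‖(Matrix.of fun i j => ⟪u i, z j⟫_𝕜).det‖ ≤ (∏ i, ‖u i‖) * ∏ j, ‖z j‖ := by
  by_cases hz : LinearIndependent 𝕜 z
  · let W := Submodule.span 𝕜 (Set.range z)
    let zW : ι → W := fun j => ⟨z j, Submodule.subset_span (Set.mem_range_self j)⟩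
    have : FiniteDimensional 𝕜 W := FiniteDimensional.span_of_finite 𝕜 (Set.finite_range z)
    have hW : finrank 𝕜 W = Fintype.card ι := finrank_span_eq_card hz
    have hproj := norm_det_inner_le_of_finrank_eq hW (fun i => W.orthogonalProjectionOnto (u i)) zW
    simp only [Submodule.inner_orthogonalProjectionOnto_eq_of_mem_right, Submodule.coe_norm] at hproj
    refine hproj.trans ?_
    gcongr
    exact W.norm_orthogonalProjectionOnto_apply_le _
  · rw [det_inner_eq_zero_of_not_linearIndependent hz, norm_zero]
    positivity

end Determinant

namespace Matrix

variable {H κ : Type*} [NormedAddCommGroup H] [InnerProductSpace 𝕜 H] [Fintype κ]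

/-- The simple tensor `A_{·i} ⊗ f i`, with `𝕜^κ ⊗ H` realised as `PiLp 2 (fun _ : κ => H)`. -/
noncomputable def colTensor (A : Matrix κ ι 𝕜) (f : ι → H) (i : ι) : PiLp 2 fun _ : κ => H :=
  WithLp.toLp 2 fun k => A k i • f i

theorem inner_colTensor (A : Matrix κ ι 𝕜) (f g : ι → H) (i j : ι) :
    ⟪A.colTensor f i, A.colTensor g j⟫_𝕜 = (Aᴴ * A) i j * ⟪f i, g j⟫_𝕜 := by
  simp only [colTensor, PiLp.inner_apply, inner_smul_left, inner_smul_right, mul_apply,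
    conjTranspose_apply, sum_mul, RCLike.star_def]
  exact Finset.sum_congr rfl fun k _ => by ring

theorem norm_colTensor_sq (A : Matrix κ ι 𝕜) (f : ι → H) (i : ι) :
    ‖A.colTensor f i‖ ^ 2 = RCLike.re ((Aᴴ * A) i i) * ‖f i‖ ^ 2 := by
  rw [← inner_self_eq_norm_sq (𝕜 := 𝕜), inner_colTensor, inner_self_eq_norm_sq_to_K,
    ← RCLike.ofReal_pow, RCLike.re_mul_ofReal]

end Matrix

end

theorem stmt15_general {X : Type*} (C : X → X → ℂ)
    {H : Type*} [NormedAddCommGroup H] [InnerProductSpace ℂ H]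
    (v w : X → H) (γ : ℝ)
    (hrep : ∀ x x' : X, C x x' = inner ℂ (v x) (w x'))
    (hb : ∀ x : X, max ‖v x‖ ‖w x‖ ≤ γ)
    (n : ℕ) (P : Matrix (Fin n) (Fin n) ℂ)
    (hP : P.PosSemidef) (hdiag : ∀ i, (P i i).re ≤ 1)
    (x y : Fin n → X) :
    ‖Matrix.det (Matrix.of fun i j => C (x i) (y j) * P i j)‖ ≤ γ ^ (2 * n) := by
  obtain ⟨A, rfl⟩ : ∃ A : Matrix (Fin n) (Fin n) ℂ, P = Aᴴ * A := by
    open scoped MatrixOrder in exact CStarAlgebra.nonneg_iff_eq_star_mul_self.mp hP.nonneg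
  have hcol : ∀ f : Fin n → H, (∀ i, ‖f i‖ ≤ γ) → ∏ i, ‖A.colTensor f i‖ ≤ γ ^ n := by
    intro f hf
    refine (Finset.prod_le_prod (fun _ _ => norm_nonneg _) fun i _ => ?_).trans_eq
      (by rw [prod_const, card_univ, Fintype.card_fin])
    have hγ : 0 ≤ γ := (norm_nonneg _).trans (hf i)
    rw [← pow_le_pow_iff_left₀ (norm_nonneg _) hγ two_ne_zero, A.norm_colTensor_sq]
    exact (mul_le_of_le_one_left (by positivity) (hdiag i)).trans
      (pow_le_pow_left₀ (norm_nonneg _) (hf i) 2)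
  calc ‖(Matrix.of fun i j => C (x i) (y j) * (Aᴴ * A) i j).det‖
      = ‖(Matrix.of fun i j => ⟪A.colTensor (v ∘ x) i, A.colTensor (w ∘ y) j⟫_ℂ).det‖ := by
        simp only [Matrix.inner_colTensor, Function.comp_apply, hrep, mul_comm]
    _ ≤ (∏ i, ‖A.colTensor (v ∘ x) i‖) * ∏ j, ‖A.colTensor (w ∘ y) j‖ := norm_det_inner_le _ _
    _ ≤ γ ^ n * γ ^ n := by
        have hv := hcol (v ∘ x) fun i => (le_max_left _ _).trans (hb (x i))
        have hw := hcol (w ∘ y) fun j => (le_max_right _ _).trans (hb (y j))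
        exact mul_le_mul hv hw (by positivity) ((by positivity : (0 : ℝ) ≤ _).trans hv)
    _ = γ ^ (2 * n) := by ring

/-- if `C` has a Gram representation `(H, v, w)` with Gram constant `γ`
and `P` is a complex Hermitian positive semidefinite `n×n` matrix with diagonal
entries `≤ 1`, then `|det((C(x_i,y_j)·P_{ij})_{i,j})| ≤ γ^(2n)`. -/
theorem stmt15 {X : Type*} (C : X → X → ℂ)
    {H : Type*} [NormedAddCommGroup H] [InnerProductSpace ℂ H] [CompleteSpace H]
    (v w : X → H) (γ : ℝ)
    (hrep : ∀ x x' : X, C x x' = inner ℂ (v x) (w x'))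
    (hb : ∀ x : X, max ‖v x‖ ‖w x‖ ≤ γ)
    (n : ℕ) (P : Matrix (Fin n) (Fin n) ℂ)
    (hP : P.PosSemidef) (hdiag : ∀ i, (P i i).re ≤ 1)
    (x y : Fin n → X) :
    ‖Matrix.det (Matrix.of fun i j => C (x i) (y j) * P i j)‖ ≤ γ ^ (2 * n) :=
  stmt15_general C v w γ hrep hb n P hP hdiag x y
end
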